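/- arXiv:1801.04773 — 2 statements merged into one kernel-verified Lean document; each statement's English description precedes it below -/
import Mathlib

section
/- Let K ⊆ ℂ be compact, W ⊆ ℂⁿ open, and g : K × W → ℂ continuous and holomorphic in w ∈ W for each fixed z ∈ K. Then the function (z, w) ↦ T_K(g(·, w))(z), where T_K is the Cauchy–Green operator applied in the z-variable, is continuous on ℂ × W and holomorphic in w ∈ W for each fixed z ∈ ℂ. -/
/-!
The kernel `ζ ↦ (z - ζ)⁻¹` is locally integrable on `ℂ`: by polar coordinates
`∫_{B(z, r)} |z - ζ|⁻¹ = 2πr`. Holomorphy in `w` is differentiation under the integral sign,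
the derivatives of `g(ζ, ·)` being bounded uniformly in `ζ ∈ K` by the Cauchy estimates.
For continuity at `(z₀, w₀)`, split `K` into `K ∩ B(z₀, δ)`, whose contribution is `O(δ)`
uniformly near `(z₀, w₀)`, and `K \ B(z₀, δ)`, on which the integrand is jointly continuous
near `(z₀, w₀)`, so that dominated convergence applies.
-/

open MeasureTheory Metric Set Filter Topology

lemma integral_ball_inv_norm {r : ℝ} (hr : 0 ≤ r) :
    ∫ x in ball (0 : ℂ) r, ‖x‖⁻¹ = 2 * Real.pi * r := by
  have hind : ∫ x in ball (0 : ℂ) r, ‖x‖⁻¹ = ∫ x : ℂ, (Iio r).indicator (·⁻¹) ‖x‖ := by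
    rw [← integral_indicator measurableSet_ball]
    congr with x
    simp [indicator]
  have hrad : ∫ y in Ioi (0 : ℝ), y ^ (Module.finrank ℝ ℂ - 1) • (Iio r).indicator (·⁻¹) y = r := by
    rw [Complex.finrank_real_complex, ← integral_indicator measurableSet_Ioi]
    have : (Ioi (0:ℝ)).indicator (fun y => y ^ (2 - 1) • (Iio r).indicator (·⁻¹) y) =
        (Ioo 0 r).indicator 1 := by
      ext y
      by_cases h0 : 0 < y
      · by_cases h1 : y < r <;> simp [indicator, h0, h1, h0.ne']
      · simp [indicator, h0]
    rw [this, integral_indicator_one measurableSet_Ioo]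
    simp [hr]
  rw [hind, integral_fun_norm_addHaar, hrad, Complex.finrank_real_complex]
  simp only [Measure.real, Complex.volume_ball, ENNReal.ofReal_one, one_pow, one_mul,
    ENNReal.coe_toReal, NNReal.coe_real_pi, smul_eq_mul, nsmul_eq_mul, Nat.cast_ofNat]
  ring

lemma integrableOn_ball_inv_norm (r : ℝ) :
    IntegrableOn (fun x : ℂ => ‖x‖⁻¹) (ball 0 r) := by
  rw [integrableOn_fun_norm_addHaar (μ := volume) (f := fun y : ℝ => y⁻¹),
    Complex.finrank_real_complex]
  refine (integrableOn_const (C := (1:ℝ)) (by simp)).congr_fun (fun y hy => ?_) measurableSet_Ioo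
  simp [hy.1.ne']

lemma preimage_sub_left_ball {G : Type*} [SeminormedAddCommGroup G] (x : G) (r : ℝ) :
    (fun y => x - y) ⁻¹' ball 0 r = ball x r := by
  ext y
  simp [dist_eq_norm, norm_sub_rev]

lemma integral_ball_inv_norm_sub (z : ℂ) {r : ℝ} (hr : 0 ≤ r) :
    ∫ ζ in ball z r, ‖z - ζ‖⁻¹ = 2 * Real.pi * r := by
  rw [← preimage_sub_left_ball, (Measure.measurePreserving_sub_left volume z)
    |>.setIntegral_preimage_emb (measurableEmbedding_subLeft z) (fun x => ‖x‖⁻¹),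
    integral_ball_inv_norm hr]

lemma integrableOn_ball_inv_norm_sub (z : ℂ) (r : ℝ) :
    IntegrableOn (fun ζ => ‖z - ζ‖⁻¹) (ball z r) := by
  rw [← preimage_sub_left_ball]
  exact ((Measure.measurePreserving_sub_left volume z).integrableOn_comp_preimage
    (measurableEmbedding_subLeft z)).2 (integrableOn_ball_inv_norm r)

lemma integrableOn_inv_sub_of_isBounded (z : ℂ) {s : Set ℂ} (hs : Bornology.IsBounded s) :
    IntegrableOn (fun ζ => (z - ζ)⁻¹) s := by
  obtain ⟨r, hr⟩ := hs.subset_ball z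
  refine IntegrableOn.mono_set ?_ hr
  exact (integrable_norm_iff (by fun_prop)).1 <| by
    simpa only [norm_inv, IntegrableOn] using integrableOn_ball_inv_norm_sub z r

lemma norm_setIntegral_div_sub_le {f : ℂ → ℂ} {s : Set ℂ} {z : ℂ} {r M : ℝ} (hr : 0 ≤ r)
    (hM : 0 ≤ M) (hs : MeasurableSet s) (hsr : s ⊆ ball z r) (hf : ∀ ζ ∈ s, ‖f ζ‖ ≤ M) :
    ‖∫ ζ in s, f ζ / (z - ζ)‖ ≤ M * (2 * Real.pi * r) := by
  have hint : IntegrableOn (fun ζ => M * ‖z - ζ‖⁻¹) (ball z r) :=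
    (integrableOn_ball_inv_norm_sub z r).const_mul M
  calc ‖∫ ζ in s, f ζ / (z - ζ)‖ ≤ ∫ ζ in s, M * ‖z - ζ‖⁻¹ := by
        refine norm_integral_le_of_norm_le (hint.mono_set hsr) ?_
        refine ae_restrict_of_forall_mem hs fun ζ hζ => ?_
        rw [norm_div, div_eq_mul_inv]
        gcongr
        exact hf ζ hζ
    _ ≤ ∫ ζ in ball z r, M * ‖z - ζ‖⁻¹ :=
        setIntegral_mono_set hint (.of_forall fun ζ => by positivity) hsr.eventuallyLE
    _ = M * (2 * Real.pi * r) := by rw [integral_const_mul, integral_ball_inv_norm_sub z hr]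

theorem continuousAt_setIntegral_of_continuousOn_prod {X Y G : Type*} [TopologicalSpace X]
    [LocallyCompactSpace X] [FirstCountableTopology X] [TopologicalSpace Y] [T2Space Y]
    [MeasurableSpace Y] [OpensMeasurableSpace Y] [NormedAddCommGroup G] [NormedSpace ℝ G]
    [SecondCountableTopologyEither Y G] {μ : Measure Y} [IsFiniteMeasureOnCompacts μ]
    {f : X → Y → G} {U : Set X} {s : Set Y} {x₀ : X} (hU : U ∈ 𝓝 x₀) (hs : IsCompact s)
    (hf : ContinuousOn f.uncurry (U ×ˢ s)) :
    ContinuousAt (fun x => ∫ y in s, f x y ∂μ) x₀ := by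
  obtain ⟨C, hC, hCU, hCc⟩ := local_compact_nhds hU
  obtain ⟨M, hM⟩ := (hCc.prod hs).exists_bound_of_continuousOn (hf.mono (prod_mono hCU subset_rfl))
  have hslice : ∀ x ∈ U, ContinuousOn (f x) s := fun x hx =>
    hf.comp (continuousOn_const.prodMk continuousOn_id) fun y hy => ⟨hx, hy⟩
  refine continuousAt_of_dominated (bound := fun _ => M) ?_ ?_
    (integrableOn_const hs.measure_ne_top) ?_
  · filter_upwards [hC] with x hx
    exact (hslice x (hCU hx)).aestronglyMeasurable hs.measurableSet
  · filter_upwards [hC] with x hx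
    exact ae_restrict_of_forall_mem hs.measurableSet fun y hy => hM (x, y) ⟨hx, hy⟩
  · refine ae_restrict_of_forall_mem hs.measurableSet fun y hy => ?_
    have : ContinuousWithinAt (fun x => f x y) U x₀ :=
      (hf (x₀, y) ⟨mem_of_mem_nhds hU, hy⟩).comp (f := fun x => (x, y))
        (continuousWithinAt_id.prodMk continuousWithinAt_const) fun x hx => ⟨hx, hy⟩
    exact this.continuousAt hU

section Continuity

variable {E : Type*} [TopologicalSpace E] [LocallyCompactSpace E] [FirstCountableTopology E]
  {K : Set ℂ} {W : Set E} {g : ℂ × E → ℂ}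

theorem continuousAt_setIntegral_div_sub (hK : IsCompact K) (hW : IsOpen W)
    (hg : ContinuousOn g (K ×ˢ W)) (z₀ : ℂ) {w₀ : E} (hw₀ : w₀ ∈ W) :
    ContinuousAt (fun p : ℂ × E => ∫ ζ in K, g (ζ, p.2) / (p.1 - ζ)) (z₀, w₀) := by
  obtain ⟨N, hN, hNW, hNc⟩ := local_compact_nhds (hW.mem_nhds hw₀)
  obtain ⟨M₀, hM₀⟩ :=
    (hK.prod hNc).exists_bound_of_continuousOn (hg.mono (prod_mono subset_rfl hNW))
  set M := max M₀ 0
  have hM : ∀ ζ ∈ K, ∀ w ∈ N, ‖g (ζ, w)‖ ≤ M := fun ζ hζ w hw =>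
    (hM₀ (ζ, w) ⟨hζ, hw⟩).trans (le_max_left _ _)
  refine continuousAt_of_locally_uniform_approx_of_continuousAt fun u hu => ?_
  obtain ⟨ε, hε, hεu⟩ := mem_uniformity_dist.1 hu
  obtain ⟨δ, hδ, hδε⟩ : ∃ δ > 0, M * (2 * Real.pi * (2 * δ)) < ε := by
    refine ⟨ε / (4 * Real.pi * (M + 1)), by positivity, ?_⟩
    have hM1 : M / (M + 1) < 1 := (div_lt_one (by positivity)).2 (lt_add_one M)
    calc M * (2 * Real.pi * (2 * (ε / (4 * Real.pi * (M + 1))))) = ε * (M / (M + 1)) := by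
          field_simp; ring
      _ < ε := mul_lt_of_lt_one_right hε hM1
  refine ⟨ball z₀ δ ×ˢ N, prod_mem_nhds (ball_mem_nhds z₀ hδ) hN,
    fun p => ∫ ζ in K \ ball z₀ δ, g (ζ, p.2) / (p.1 - ζ), ?_, fun p hp => hεu ?_⟩
  · refine continuousAt_setIntegral_of_continuousOn_prod
      (prod_mem_nhds (ball_mem_nhds z₀ hδ) (hW.mem_nhds hw₀)) (hK.diff isOpen_ball) ?_
    refine (hg.comp (continuousOn_snd.prodMk (continuousOn_snd.comp continuousOn_fst
      fun _ h => h.1)) fun q hq => ⟨hq.2.1, hq.1.2⟩).div (by fun_prop) ?_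
    rintro ⟨⟨z, w⟩, ζ⟩ ⟨⟨hz, -⟩, -, hζ⟩
    exact sub_ne_zero.2 fun h => hζ (h ▸ hz)
  · have hint : IntegrableOn (fun ζ => g (ζ, p.2) / (p.1 - ζ)) K := by
      have hgp : ContinuousOn (fun ζ => g (ζ, p.2)) K :=
        hg.comp (continuousOn_id.prodMk continuousOn_const) fun ζ hζ => ⟨hζ, hNW hp.2⟩
      simpa only [div_eq_mul_inv] using
        (integrableOn_inv_sub_of_isBounded p.1 hK.isBounded).continuousOn_mul hgp hK
    rw [dist_eq_norm, ← integral_inter_add_sdiff measurableSet_ball hint, add_sub_cancel_right]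
    refine (norm_setIntegral_div_sub_le (by positivity) (le_max_right _ _)
      (hK.measurableSet.inter measurableSet_ball) ?_ fun ζ hζ => hM ζ hζ.1 p.2 hp.2).trans_lt hδε
    have hp₁ : dist z₀ p.1 < δ := mem_ball'.1 hp.1
    exact fun ζ hζ => ball_subset_ball' (by linarith) hζ.2

end Continuity

section Holomorphy

variable {E F : Type*} [NormedAddCommGroup E] [NormedSpace ℂ E]

theorem norm_fderiv_le_of_forall_mem_ball_norm_le [NormedAddCommGroup F] [NormedSpace ℂ F]
    {f : E → F} {c : E} {r M : ℝ} (hf : DifferentiableOn ℂ f (ball c r)) (hr : 0 < r)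
    (hM : ∀ w ∈ ball c r, ‖f w‖ ≤ M) :
    ‖fderiv ℂ f c‖ ≤ 2 * M / r := by
  refine Complex.norm_fderiv_le_div_of_mapsTo_ball hf (fun w hw => ?_) hr
  rw [mem_closedBall, dist_eq_norm, two_mul]
  exact (norm_sub_le _ _).trans (add_le_add (hM w hw) (hM c (mem_ball_self hr)))

variable [FiniteDimensional ℂ E]

/-- The derivative at `w₀` only sees `g` near `w₀`, so we may replace `g` by a Tietze extension
of its restriction to `K ×ˢ closedBall w₀ R`; for a globally continuous family, measurability of
the derivative is `measurable_fderiv_with_param`. -/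
theorem aestronglyMeasurable_fderiv_of_continuousOn {α : Type*} [MetricSpace α]
    [MeasurableSpace α] [OpensMeasurableSpace α] {μ : Measure α} {K : Set α} {W : Set E}
    {g : α × E → ℂ} (hK : IsClosed K) (hW : IsOpen W) (hg : ContinuousOn g (K ×ˢ W))
    {w₀ : E} (hw₀ : w₀ ∈ W) :
    AEStronglyMeasurable (fun a => fderiv ℂ (fun w => g (a, w)) w₀) (μ.restrict K) := by
  obtain ⟨R, hR, hRW⟩ := nhds_basis_closedBall.mem_iff.1 (hW.mem_nhds hw₀)
  have hS : IsClosed (K ×ˢ closedBall w₀ R) := hK.prod isClosed_closedBall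
  obtain ⟨G, hG⟩ := ContinuousMap.exists_restrict_eq hS
    ⟨_, (hg.mono (prod_mono subset_rfl hRW)).domRestrict⟩
  have hGg : ∀ a ∈ K, ∀ w ∈ closedBall w₀ R, G (a, w) = g (a, w) := fun a ha w hw =>
    congrArg (fun h : C(K ×ˢ closedBall w₀ R, ℂ) => h ⟨(a, w), ha, hw⟩) hG
  borelize E (E →L[ℂ] ℂ)
  have hmeas : Measurable fun a => fderiv ℂ (fun w => G (a, w)) w₀ :=
    (measurable_fderiv_with_param ℂ (f := fun a w => G (a, w)) G.continuous).comp
      (measurable_id.prodMk measurable_const)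
  refine hmeas.aestronglyMeasurable.congr ?_
  refine ae_restrict_of_forall_mem hK.measurableSet fun a ha => ?_
  refine Filter.EventuallyEq.fderiv_eq ?_
  filter_upwards [closedBall_mem_nhds w₀ hR] with w hw using hGg a ha w hw

theorem differentiableOn_setIntegral_mul {α : Type*} [MetricSpace α] [MeasurableSpace α]
    [BorelSpace α] {μ : Measure α} {K : Set α} {W : Set E} {g : α × E → ℂ} {k : α → ℂ}
    (hK : IsCompact K) (hW : IsOpen W) (hg : ContinuousOn g (K ×ˢ W))
    (hgh : ∀ a ∈ K, DifferentiableOn ℂ (fun w => g (a, w)) W) (hk : IntegrableOn k K μ) :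
    DifferentiableOn ℂ (fun w => ∫ a in K, g (a, w) * k a ∂μ) W := by
  intro w₀ hw₀
  obtain ⟨R, hR, hRW⟩ := nhds_basis_closedBall.mem_iff.1 (hW.mem_nhds hw₀)
  obtain ⟨M, hM⟩ := (hK.prod (isCompact_closedBall w₀ R)).exists_bound_of_continuousOn
    (hg.mono (prod_mono subset_rfl hRW))
  have hslice : ∀ w ∈ W, ContinuousOn (fun a => g (a, w)) K := fun w hw =>
    hg.comp (continuousOn_id.prodMk continuousOn_const) fun a ha => ⟨ha, hw⟩
  have hball : ∀ x ∈ ball w₀ (R / 2), ball x (R / 2) ⊆ closedBall w₀ R := fun x hx =>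
    (ball_subset_ball' (by linarith [mem_ball.1 hx])).trans ball_subset_closedBall
  have hcauchy : ∀ a ∈ K, ∀ x ∈ ball w₀ (R / 2),
      ‖fderiv ℂ (fun w => g (a, w)) x‖ ≤ 2 * M / (R / 2) := fun a ha x hx =>
    norm_fderiv_le_of_forall_mem_ball_norm_le (((hgh a ha).mono hRW).mono (hball x hx))
      (half_pos hR) fun w hw => hM (a, w) ⟨ha, hball x hx hw⟩
  refine (hasFDerivAt_integral_of_dominated_of_fderiv_le (μ := μ.restrict K)
    (F := fun w a => g (a, w) * k a) (F' := fun x a => k a • fderiv ℂ (fun w => g (a, w)) x)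
    (bound := fun a => ‖k a‖ * (2 * M / (R / 2))) (ball_mem_nhds w₀ (half_pos hR))
    ?_ ?_ ?_ ?_ ?_ ?_).differentiableAt.differentiableWithinAt
  · filter_upwards [hW.mem_nhds hw₀] with w hw
    exact ((hslice w hw).aestronglyMeasurable hK.measurableSet).mul hk.aestronglyMeasurable
  · exact hk.continuousOn_mul (hslice w₀ hw₀) hK
  · exact hk.aestronglyMeasurable.smul
      (aestronglyMeasurable_fderiv_of_continuousOn hK.isClosed hW hg hw₀)
  · refine ae_restrict_of_forall_mem hK.measurableSet fun a ha x hx => ?_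
    rw [norm_smul]
    exact mul_le_mul_of_nonneg_left (hcauchy a ha x hx) (norm_nonneg _)
  · exact hk.norm.mul_const _
  · refine ae_restrict_of_forall_mem hK.measurableSet fun a ha x hx => ?_
    exact ((hgh a ha).differentiableAt (hW.mem_nhds (hRW (hball x hx (mem_ball_self
      (half_pos hR)))))).hasFDerivAt.mul_const (k a)

end Holomorphy

/-- The Cauchy–Green operator preserves holomorphic dependence on a
parameter: if `g : K × W → ℂ` is continuous and holomorphic in `w ∈ W ⊆ ℂⁿ` for each fixed
`z ∈ K`, then `(z, w) ↦ T_K(g(·, w))(z)` is continuous on `ℂ × W` and holomorphic in `w`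
for each fixed `z ∈ ℂ`. -/
theorem stmt_9 {n : ℕ} (K : Set ℂ) (hK : IsCompact K)
    (W : Set (Fin n → ℂ)) (hW : IsOpen W)
    (g : ℂ × (Fin n → ℂ) → ℂ) (hgc : ContinuousOn g (K ×ˢ W))
    (hgh : ∀ z ∈ K, DifferentiableOn ℂ (fun w => g (z, w)) W) :
    ContinuousOn (fun p : ℂ × (Fin n → ℂ) =>
        (Real.pi : ℂ)⁻¹ * ∫ ζ in K, g (ζ, p.2) / (p.1 - ζ)) (Set.univ ×ˢ W) ∧
      ∀ z : ℂ, DifferentiableOn ℂ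
        (fun w : Fin n → ℂ => (Real.pi : ℂ)⁻¹ * ∫ ζ in K, g (ζ, w) / (z - ζ)) W := by
  refine ⟨continuousOn_const.mul fun p hp =>
    (continuousAt_setIntegral_div_sub hK hW hgc p.1 hp.2).continuousWithinAt, fun z => ?_⟩
  have hk := integrableOn_inv_sub_of_isBounded z hK.isBounded
  simpa only [div_eq_mul_inv] using (differentiableOn_setIntegral_mul hK hW hgc hgh hk).const_mul _
end

section
/- Let E ⊆ ℂ be a closed subset with ℂ \ E connected. Then E has the bounded exhaustion hulls property (BEH), i.e. for every closed disc Δ ⊆ ℂ the union of the bounded connected components of ℂ \ (E ∪ Δ) is bounded, if and only if ℂP¹ \ E is locally connected at ∞. -/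
open OnePoint

/-- The union of the holes of a set `F ⊆ ℂ`: the union of all bounded connected
components of the complement `ℂ \ F`. -/
def holesSet (F : Set ℂ) : Set ℂ :=
  {z | z ∉ F ∧ Bornology.IsBounded (connectedComponentIn Fᶜ z)}

open Set Metric Bornology in
lemma infty_mem_closure_of_unbounded {C : Set ℂ} (h : ¬ IsBounded C) :
    OnePoint.infty ∈ closure (((↑·) : ℂ → OnePoint ℂ) '' C) := by
  rw [mem_closure_iff_nhds]
  intro t ht
  obtain ⟨s, ⟨hscl, hscp⟩, hst⟩ := OnePoint.hasBasis_nhds_infty.mem_iff.1 ht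
  have : ¬ C ⊆ s := fun hCs => h (hscp.isBounded.subset hCs)
  obtain ⟨z, hzC, hzs⟩ := Set.not_subset.1 this
  exact ⟨(z : OnePoint ℂ), hst (Or.inl ⟨z, hzs, rfl⟩), ⟨z, hzC, rfl⟩⟩

open Set Metric Bornology in
lemma infty_notMem_closure_of_bounded {C : Set ℂ} (h : IsBounded C) :
    OnePoint.infty ∉ closure (((↑·) : ℂ → OnePoint ℂ) '' C) := by
  rw [mem_closure_iff_nhds]
  push_neg
  refine ⟨((↑·) : ℂ → OnePoint ℂ) '' (closure C)ᶜ ∪ {OnePoint.infty}, ?_, ?_⟩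
  · exact OnePoint.hasBasis_nhds_infty.mem_of_mem ⟨isClosed_closure, h.isCompact_closure⟩
  · rw [Set.eq_empty_iff_forall_notMem]
    rintro w ⟨hw1, z, hzC, rfl⟩
    rcases hw1 with ⟨y, hy, hyz⟩ | hw
    · rw [OnePoint.coe_eq_coe] at hyz
      exact hy (hyz ▸ subset_closure hzC)
    · exact OnePoint.coe_ne_infty z hw

open Set in
lemma closure_inter_open_subset {O : Set ℂ} (hO : IsOpen O) (z : ℂ) :
    closure (connectedComponentIn O z) ∩ O ⊆ connectedComponentIn O z := by
  intro y ⟨hyc, hyO⟩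
  have hopen : IsOpen (connectedComponentIn O y) := hO.connectedComponentIn
  have hmem : connectedComponentIn O y ∈ nhds y := hopen.mem_nhds (mem_connectedComponentIn hyO)
  obtain ⟨w, hw1, hw2⟩ := mem_closure_iff_nhds.1 hyc _ hmem
  have : connectedComponentIn O z = connectedComponentIn O y :=
    (connectedComponentIn_eq hw2).trans (connectedComponentIn_eq hw1).symm
  rw [this]
  exact mem_connectedComponentIn hyO

open Set Metric Bornology in
/-- If a preconnected set in `ℂP¹` contains `∞` and a point of a bounded component of an
open set `O`, it cannot be contained in `{∞} ∪ O`. -/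
lemma no_preconnected_through_bounded_component {O : Set ℂ} (hO : IsOpen O) {z : ℂ}
    (hzO : z ∈ O) (hbd : IsBounded (connectedComponentIn O z))
    {W : Set (OnePoint ℂ)} (hW : IsPreconnected W)
    (hWsub : W ⊆ insert OnePoint.infty (((↑·) : ℂ → OnePoint ℂ) '' O))
    (hzW : (z : OnePoint ℂ) ∈ W) (hiW : OnePoint.infty ∈ W) : False := by
  set C := connectedComponentIn O z with hC
  set A : Set (OnePoint ℂ) := ((↑·) : ℂ → OnePoint ℂ) '' C with hA
  set B : Set (OnePoint ℂ) := (closure A)ᶜ with hB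
  have hAopen : IsOpen A := OnePoint.isOpenMap_coe _ hO.connectedComponentIn
  have hBopen : IsOpen B := isClosed_closure.isOpen_compl
  have hinfB : OnePoint.infty ∈ B := infty_notMem_closure_of_bounded hbd
  have hcover : W ⊆ A ∪ B := by
    intro w hw
    by_cases hwA : w ∈ closure A
    · rcases hWsub hw with h1 | ⟨y, hyO, rfl⟩
      · exact absurd (h1 ▸ hwA) hinfB
      · left
        have hemb := OnePoint.isOpenEmbedding_coe (X := ℂ)
        have : y ∈ closure C := by
          rw [hemb.isEmbedding.closure_eq_preimage_closure_image C]
          exact hwA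
        exact ⟨y, closure_inter_open_subset hO z ⟨this, hyO⟩, rfl⟩
    · exact Or.inr hwA
  have h1 : (W ∩ A).Nonempty := ⟨(z : OnePoint ℂ), hzW, ⟨z, mem_connectedComponentIn hzO, rfl⟩⟩
  have h2 : (W ∩ B).Nonempty := ⟨OnePoint.infty, hiW, hinfB⟩
  obtain ⟨w, -, hwA, hwB⟩ := hW A B hAopen hBopen hcover h1 h2
  exact hwB (subset_closure hwA)

/-- (Arakelian's condition, for `X = ℂ`.)  Let `E ⊆ ℂ` be closed with
`ℂ \ E` connected.  Then the complement of `E` in the Riemann sphere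
`ℂP¹ = ℂ ∪ {∞}` is locally connected at `∞` (every neighborhood of `∞` in `ℂP¹ \ E`
contains a connected neighborhood of `∞`) if and only if `E` has the bounded exhaustion
hulls property: for every closed disc `Δ`, the union of the bounded connected components
of `ℂ \ (E ∪ Δ)` is bounded. -/
theorem stmt_14 (E : Set ℂ) (hE : IsClosed E) (hconn : IsConnected Eᶜ) :
    (∀ V ∈ nhdsWithin (OnePoint.infty : OnePoint ℂ)
        (insert OnePoint.infty (((↑·) : ℂ → OnePoint ℂ) '' Eᶜ)),
      ∃ W ∈ nhdsWithin (OnePoint.infty : OnePoint ℂ)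
        (insert OnePoint.infty (((↑·) : ℂ → OnePoint ℂ) '' Eᶜ)),
        W ⊆ V ∩ insert OnePoint.infty (((↑·) : ℂ → OnePoint ℂ) '' Eᶜ) ∧ IsPreconnected W) ↔
    ∀ (c : ℂ) (R : ℝ), Bornology.IsBounded (holesSet (E ∪ Metric.closedBall c R)) := by
  classical
  set S : Set (OnePoint ℂ) := insert OnePoint.infty (((↑·) : ℂ → OnePoint ℂ) '' Eᶜ) with hS
  have hinfS : OnePoint.infty ∈ S := Set.mem_insert _ _
  constructor
  · -- local connectedness at ∞ ⇒ BEH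
    intro hlc c R
    by_contra hunb
    set Δ : Set ℂ := Metric.closedBall c R with hΔ
    set O : Set ℂ := (E ∪ Δ)ᶜ with hO
    have hOopen : IsOpen O := (hE.union Metric.isClosed_closedBall).isOpen_compl
    -- V = complement of the image of Δ
    set V : Set (OnePoint ℂ) := (((↑·) : ℂ → OnePoint ℂ) '' Δ)ᶜ with hV
    have hVopen : IsOpen V := OnePoint.isOpen_compl_image_coe.2
      ⟨Metric.isClosed_closedBall, isCompact_closedBall c R⟩
    have hVnhds : V ∈ nhdsWithin (OnePoint.infty : OnePoint ℂ) S :=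
      mem_nhdsWithin_of_mem_nhds
        (hVopen.mem_nhds (fun h => OnePoint.infty_notMem_image_coe h))
    obtain ⟨W, hWnhds, hWsub, hWconn⟩ := hlc V hVnhds
    obtain ⟨u, huopen, hinfu, huS⟩ := mem_nhdsWithin.1 hWnhds
    obtain ⟨L, ⟨hLcl, hLcp⟩, hLu⟩ :=
      OnePoint.hasBasis_nhds_infty.mem_iff.1 (huopen.mem_nhds hinfu)
    -- pick z in holesSet far away
    obtain ⟨ρ, hρ⟩ := (hLcp.isBounded.union (Metric.isBounded_closedBall (x := c) (r := R))
      ).subset_closedBall 0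
    have : ¬ holesSet (E ∪ Δ) ⊆ Metric.closedBall 0 ρ := fun hsub =>
      hunb ((Metric.isBounded_closedBall).subset hsub)
    obtain ⟨z, hzH, hzρ⟩ := Set.not_subset.1 this
    obtain ⟨hzEΔ, hzbd⟩ := hzH
    have hzO : z ∈ O := hzEΔ
    have hzE : z ∈ Eᶜ := fun h => hzEΔ (Or.inl h)
    have hzL : z ∉ L := fun h => hzρ (hρ (Or.inl h))
    have hzW : (z : OnePoint ℂ) ∈ W :=
      huS ⟨hLu (Or.inl ⟨z, hzL, rfl⟩), Set.mem_insert_iff.2 (Or.inr ⟨z, hzE, rfl⟩)⟩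
    have hiW : OnePoint.infty ∈ W := huS ⟨hinfu, hinfS⟩
    have hWsub' : W ⊆ insert OnePoint.infty (((↑·) : ℂ → OnePoint ℂ) '' O) := by
      intro w hw
      obtain ⟨hwV, hwS⟩ := hWsub hw
      rcases hwS with h | ⟨y, hyE, rfl⟩
      · exact h ▸ Set.mem_insert _ _
      · refine Set.mem_insert_iff.2 (Or.inr ⟨y, ?_, rfl⟩)
        rintro (h | h)
        · exact hyE h
        · exact hwV ⟨y, h, rfl⟩
    exact no_preconnected_through_bounded_component hOopen hzO hzbd hWconn hWsub' hzW hiW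
  · -- BEH ⇒ local connectedness at ∞
    intro hbeh V hVnhds
    obtain ⟨u, huopen, hinfu, huS⟩ := mem_nhdsWithin.1 hVnhds
    obtain ⟨K, ⟨hKcl, hKcp⟩, hKu⟩ :=
      OnePoint.hasBasis_nhds_infty.mem_iff.1 (huopen.mem_nhds hinfu)
    obtain ⟨r, hKr⟩ := hKcp.isBounded.subset_closedBall 0
    set Δ : Set ℂ := Metric.closedBall 0 r with hΔ
    set O : Set ℂ := (E ∪ Δ)ᶜ with hO
    have hOopen : IsOpen O := (hE.union Metric.isClosed_closedBall).isOpen_compl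
    obtain ⟨r', hr'⟩ := ((hbeh 0 r).union (Metric.isBounded_closedBall (x := 0) (r := r))
      ).subset_closedBall 0
    -- the union of the unbounded components, plus ∞
    set U : Set ℂ := {z | z ∈ O ∧ ¬ Bornology.IsBounded (connectedComponentIn O z)} with hU
    set W : Set (OnePoint ℂ) := insert OnePoint.infty (((↑·) : ℂ → OnePoint ℂ) '' U) with hW
    have hUE : U ⊆ Eᶜ := fun z hz h => hz.1 (Or.inl h)
    have hWS : W ⊆ S := by
      rintro w (h | ⟨y, hyU, rfl⟩)
      · exact h ▸ hinfS
      · exact Set.mem_insert_iff.2 (Or.inr ⟨y, hUE hyU, rfl⟩)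
    refine ⟨W, ?_, Set.subset_inter ?_ hWS, ?_⟩
    · -- W is a neighborhood of ∞ within S
      refine mem_nhdsWithin.2 ⟨(((↑·) : ℂ → OnePoint ℂ) '' Metric.closedBall 0 r')ᶜ,
        OnePoint.isOpen_compl_image_coe.2 ⟨Metric.isClosed_closedBall, isCompact_closedBall 0 r'⟩,
        fun h => OnePoint.infty_notMem_image_coe h, ?_⟩
      rintro w ⟨hw1, hw2⟩
      rcases hw2 with h | ⟨y, hyE, rfl⟩
      · exact h ▸ Set.mem_insert _ _
      · have hyr' : y ∉ Metric.closedBall 0 r' := fun h => hw1 ⟨y, h, rfl⟩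
        have hyΔ : y ∉ Δ := fun h => hyr' (hr' (Or.inr h))
        have hyO : y ∈ O := fun h => h.elim hyE hyΔ
        have hybd : ¬ Bornology.IsBounded (connectedComponentIn O y) := fun hb =>
          hyr' (hr' (Or.inl ⟨hyO, hb⟩))
        exact Set.mem_insert_iff.2 (Or.inr ⟨y, ⟨hyO, hybd⟩, rfl⟩)
    · -- W ⊆ V
      rintro w (h | ⟨y, hyU, rfl⟩)
      · exact h ▸ huS ⟨hinfu, hinfS⟩
      · have hyK : y ∉ K := fun h => hyU.1 (Or.inr (hKr h))
        exact huS ⟨hKu (Or.inl ⟨y, hyK, rfl⟩),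
          Set.mem_insert_iff.2 (Or.inr ⟨y, hUE hyU, rfl⟩)⟩
    · -- W is preconnected
      set c : Set (Set (OnePoint ℂ)) :=
        insert {OnePoint.infty}
          {T | ∃ z ∈ U, T = insert OnePoint.infty
            (((↑·) : ℂ → OnePoint ℂ) '' connectedComponentIn O z)} with hc
      have hWc : W = ⋃₀ c := by
        apply Set.Subset.antisymm
        · rintro w (h | ⟨y, hyU, rfl⟩)
          · exact ⟨{OnePoint.infty}, Set.mem_insert _ _, h ▸ rfl⟩
          · exact ⟨_, Set.mem_insert_iff.2 (Or.inr ⟨y, hyU, rfl⟩),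
              Set.mem_insert_iff.2 (Or.inr ⟨y, mem_connectedComponentIn hyU.1, rfl⟩)⟩
        · rintro w ⟨T, hT, hwT⟩
          rcases hT with h | ⟨z, hzU, rfl⟩
          · exact (h ▸ hwT) ▸ Set.mem_insert _ _
          · rcases hwT with h | ⟨y, hyC, rfl⟩
            · exact h ▸ Set.mem_insert _ _
            · have hyO : y ∈ O := connectedComponentIn_subset O z hyC
              have : connectedComponentIn O y = connectedComponentIn O z :=
                (connectedComponentIn_eq hyC).symm
              have hybd : ¬ Bornology.IsBounded (connectedComponentIn O y) :=
                this ▸ hzU.2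
              exact Set.mem_insert_iff.2 (Or.inr ⟨y, ⟨hyO, hybd⟩, rfl⟩)
      rw [hWc]
      refine isPreconnected_sUnion OnePoint.infty c ?_ ?_
      · rintro T (h | ⟨z, hzU, rfl⟩)
        · exact h ▸ rfl
        · exact Set.mem_insert _ _
      · rintro T (h | ⟨z, hzU, rfl⟩)
        · exact h ▸ isPreconnected_singleton
        · have hpc : IsPreconnected
              (((↑·) : ℂ → OnePoint ℂ) '' connectedComponentIn O z) :=
            isPreconnected_connectedComponentIn.image _
              OnePoint.continuous_coe.continuousOn
          refine hpc.subset_closure (Set.subset_insert _ _) ?_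
          rintro w (h | hw)
          · exact h ▸ infty_mem_closure_of_unbounded hzU.2
          · exact subset_closure hw
end
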